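/- Let x ∈ ℝ^n with ‖x‖₂ = 1, ‖x‖₀ = k, and let λ ∈ ℝ. Then the Frobenius norm of X₀ = λ x xᵀ + P_T(sgn(x)sgn(x)ᵀ) satisfies ‖X₀‖_F ≤ λ + ‖x‖₁² + 2√k ‖x‖₁, provided λ ≥ 0. -/

import Mathlib

open Matrix WithLp
open scoped Matrix.Norms.Frobenius

/-!
Write `L = ‖x‖₁` and `s = sgn x`. Then `X₀ = (λ - L²) x xᵀ + L (x sᵀ + s xᵀ)`, and the Frobenius
norm of a rank-one matrix `u vᵀ` is `‖u‖₂ ‖v‖₂`. Since `‖x‖₂ = 1` and `‖s‖₂ = √k`, the triangle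
inequality gives `‖X₀‖_F ≤ |λ - L²| + 2 √k L`, and `|λ - L²| ≤ λ + L²` for `λ ≥ 0`.
-/

namespace Matrix

variable {m n : Type*} [Fintype m] [Fintype n]

theorem frobenius_norm_sq {α : Type*} [SeminormedAddCommGroup α] (A : Matrix m n α) :
    ‖A‖ ^ 2 = ∑ i, ∑ j, ‖A i j‖ ^ 2 := by
  change ‖toLp 2 fun i => toLp 2 fun j => A i j‖ ^ 2 = _
  simp only [PiLp.norm_sq_eq_of_L2]

theorem frobenius_norm_eq_sqrt_sum_sq (A : Matrix m n ℝ) :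
    ‖A‖ = √(∑ i, ∑ j, A i j ^ 2) := by
  rw [← Real.sqrt_sq (norm_nonneg A), frobenius_norm_sq]
  simp only [Real.norm_eq_abs, sq_abs]

theorem frobenius_norm_vecMulVec {α : Type*} [NormedDivisionRing α] (u : m → α) (v : n → α) :
    ‖vecMulVec u v‖ = ‖toLp 2 u‖ * ‖toLp 2 v‖ := by
  refine (pow_left_inj₀ (norm_nonneg _) (by positivity) two_ne_zero).mp ?_
  simp only [frobenius_norm_sq, mul_pow, PiLp.norm_sq_eq_of_L2, vecMulVec_apply, norm_mul,
    Finset.sum_mul_sum]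

end Matrix

theorem Real.norm_toLp_sign {ι : Type*} [Fintype ι] (x : ι → ℝ) :
    ‖toLp 2 fun i => Real.sign (x i)‖ = √(Finset.univ.filter fun i => x i ≠ 0).card := by
  have hsq : ∀ i, ‖Real.sign (x i)‖ ^ 2 = if x i ≠ 0 then 1 else 0 := by
    intro i
    rcases lt_trichotomy (x i) 0 with h | h | h
    · simp [Real.sign_of_neg h, h.ne]
    · simp [h]
    · simp [Real.sign_of_pos h, h.ne']
  rw [EuclideanSpace.norm_eq, Finset.sum_congr rfl fun i _ => hsq i, Finset.sum_boole]

theorem stmt3 (n k : ℕ) (x : Fin n → ℝ) (lam : ℝ)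
    (hx2 : ∑ i, x i ^ 2 = 1)
    (hx0 : (Finset.univ.filter fun i => x i ≠ 0).card = k)
    (hlam : 0 ≤ lam) :
    let s : Fin n → ℝ := fun i => Real.sign (x i)
    let X₀ : Matrix (Fin n) (Fin n) ℝ :=
      lam • vecMulVec x x +
        ((∑ i, |x i|) • (vecMulVec x s + vecMulVec s x) -
          ((∑ i, |x i|) ^ 2) • vecMulVec x x)
    Real.sqrt (∑ i, ∑ j, X₀ i j ^ 2) ≤
      lam + (∑ i, |x i|) ^ 2 + 2 * Real.sqrt k * (∑ i, |x i|) := by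
  intro s X₀
  set L := ∑ i, |x i|
  have hL : 0 ≤ L := Finset.sum_nonneg fun i _ => abs_nonneg (x i)
  have hx : ‖toLp 2 x‖ = 1 := by simp [EuclideanSpace.norm_eq, hx2]
  have hs : ‖toLp 2 s‖ = √k := by rw [Real.norm_toLp_sign, hx0]
  have hX₀ : X₀ = (lam - L ^ 2) • vecMulVec x x + L • (vecMulVec x s + vecMulVec s x) := by
    simp only [X₀]
    module
  rw [← frobenius_norm_eq_sqrt_sum_sq, hX₀]
  calc ‖(lam - L ^ 2) • vecMulVec x x + L • (vecMulVec x s + vecMulVec s x)‖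
      ≤ |lam - L ^ 2| * ‖vecMulVec x x‖ + L * (‖vecMulVec x s‖ + ‖vecMulVec s x‖) := by
        refine (norm_add_le _ _).trans (add_le_add ?_ ?_)
        · rw [norm_smul, Real.norm_eq_abs]
        · rw [norm_smul, Real.norm_of_nonneg hL]
          gcongr
          exact norm_add_le _ _
    _ = |lam - L ^ 2| + 2 * √k * L := by
        simp only [frobenius_norm_vecMulVec, hx, hs]
        ring
    _ ≤ lam + L ^ 2 + 2 * √k * L := by
        gcongr
        exact abs_sub_le_iff.mpr ⟨by linarith [sq_nonneg L], by linarith [sq_nonneg L]⟩
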